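/- (Prékopa) If ρ : ℝⁿ × ℝᵐ → [0,∞) is log-concave and integrable in the second variable, then the marginal x ↦ ∫_{ℝᵐ} ρ(x,y) dy is log-concave on ℝⁿ. -/

import Mathlib

/-!
The Prékopa–Leindler inequality: if `f x ^ p * g y ^ (1 - p) ≤ h (p • x + (1 - p) • y)` for all
`x, y`, then `(∫ f) ^ p * (∫ g) ^ (1 - p) ≤ ∫ h`. On `ℝ`, after rescaling `f` and `g` to
supremum `1`, the superlevel sets satisfy `p • {f > t} + (1 - p) • {g > t} ⊆ {h > t}`, so the
one-dimensional Brunn–Minkowski inequality `|A| + |B| ≤ |A + B|` and the layer cake formula give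
`p ∫ f + (1 - p) ∫ g ≤ ∫ h`, and AM-GM finishes. The inequality tensorises by Tonelli, hence holds
on `ℝᵐ`; applied to the slices `y ↦ ρ (x, y)`, `y ↦ ρ (x', y)` and `y ↦ ρ (p • x + (1 - p) • x', y)`
it is the log-concavity of the marginal.
-/

open Set MeasureTheory
open scoped ENNReal Pointwise NNReal

namespace ENNReal

theorem min_le_rpow_mul_rpow {p : ℝ} (hp : p ∈ Icc (0 : ℝ) 1) (a b : ℝ≥0∞) :
    min a b ≤ a ^ p * b ^ (1 - p) :=
  calc min a b = min a b ^ p * min a b ^ (1 - p) := by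
        rw [← rpow_add_of_nonneg _ _ hp.1 (sub_nonneg.2 hp.2), add_sub_cancel, rpow_one]
    _ ≤ a ^ p * b ^ (1 - p) := mul_le_mul' (rpow_le_rpow (min_le_left _ _) hp.1)
        (rpow_le_rpow (min_le_right _ _) (sub_nonneg.2 hp.2))

theorem geom_mean_le_arith_mean2_weighted {p : ℝ} (hp : p ∈ Ioo (0 : ℝ) 1) (a b : ℝ≥0∞) :
    a ^ p * b ^ (1 - p) ≤ ENNReal.ofReal p * a + ENNReal.ofReal (1 - p) * b := by
  have hq : 0 < 1 - p := sub_pos.2 hp.2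
  rcases eq_or_ne a ∞ with rfl | ha
  · simp [mul_top (ofReal_pos.2 hp.1).ne']
  rcases eq_or_ne b ∞ with rfl | hb
  · simp [mul_top (ofReal_pos.2 hq).ne']
  lift a to ℝ≥0 using ha
  lift b to ℝ≥0 using hb
  have hamgm := NNReal.geom_mean_le_arith_mean2_weighted p.toNNReal (1 - p).toNNReal a b
    (by rw [← Real.toNNReal_add hp.1.le hq.le, add_sub_cancel, Real.toNNReal_one])
  rw [Real.coe_toNNReal _ hp.1.le, Real.coe_toNNReal _ hq.le] at hamgm
  rw [← coe_rpow_of_nonneg _ hp.1.le, ← coe_rpow_of_nonneg _ hq.le]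
  exact coe_le_coe.2 hamgm

theorem inv_mul_rpow_mul_inv_mul_rpow {a b : ℝ≥0∞} (ha : a ≠ ∞) (hb : b ≠ ∞) {p : ℝ}
    (hp : p ∈ Icc (0 : ℝ) 1) (x y : ℝ≥0∞) :
    (a⁻¹ * x) ^ p * (b⁻¹ * y) ^ (1 - p) = (a ^ p * b ^ (1 - p))⁻¹ * (x ^ p * y ^ (1 - p)) := by
  have hq : 0 ≤ 1 - p := sub_nonneg.2 hp.2
  rw [mul_rpow_of_nonneg _ _ hp.1, mul_rpow_of_nonneg _ _ hq, inv_rpow, inv_rpow,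
    ENNReal.mul_inv (.inr (rpow_ne_top_of_nonneg hq hb)) (.inl (rpow_ne_top_of_nonneg hp.1 ha))]
  ring

theorem iSup_rpow {ι : Sort*} (f : ι → ℝ≥0∞) {p : ℝ} (hp : 0 < p) :
    (⨆ i, f i) ^ p = ⨆ i, f i ^ p :=
  (orderIsoRpow p hp).map_iSup f

end ENNReal

theorem lintegral_eq_lintegral_meas_ofReal_lt {α : Type*} [MeasurableSpace α] (μ : Measure α)
    {f : α → ℝ≥0∞} (hf : Measurable f) (hf_top : ∀ x, f x ≠ ∞) :
    ∫⁻ x, f x ∂μ = ∫⁻ t in Ioi 0, μ {x | ENNReal.ofReal t < f x} := by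
  calc ∫⁻ x, f x ∂μ = ∫⁻ x, ENNReal.ofReal (f x).toReal ∂μ := by
        simp only [ENNReal.ofReal_toReal (hf_top _)]
    _ = ∫⁻ t in Ioi 0, μ {x | t < (f x).toReal} :=
        lintegral_eq_lintegral_meas_lt μ (.of_forall fun _ => ENNReal.toReal_nonneg)
          hf.ennreal_toReal.aemeasurable
    _ = ∫⁻ t in Ioi 0, μ {x | ENNReal.ofReal t < f x} := by
        refine setLIntegral_congr_fun measurableSet_Ioi fun t ht => ?_
        simp only [ENNReal.ofReal_lt_iff_lt_toReal (le_of_lt ht) (hf_top _)]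

theorem lintegral_eq_iSup_lintegral_min_natCast {α : Type*} [MeasurableSpace α] (μ : Measure α)
    {f : α → ℝ≥0∞} (hf : Measurable f) :
    ∫⁻ x, f x ∂μ = ⨆ k : ℕ, ∫⁻ x, min (f x) k ∂μ := by
  rw [← lintegral_iSup (fun k => hf.min measurable_const)
    fun i j hij x => min_le_min le_rfl (Nat.cast_le.2 hij)]
  congr 1 with x
  rw [← inf_iSup_eq, ENNReal.iSup_natCast, inf_top_eq]

namespace Real

theorem volume_add_volume_le_volume_add_of_isCompact {K L : Set ℝ} (hK : IsCompact K)
    (hL : IsCompact L) (hK₀ : K.Nonempty) (hL₀ : L.Nonempty) :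
    volume K + volume L ≤ volume (K + L) := by
  set a := sSup K
  set b := sInf L
  have haK : a ∈ K := hK.sSup_mem hK₀
  have hbL : b ∈ L := hL.sInf_mem hL₀
  have hunion : (b +ᵥ K) ∪ (a +ᵥ L) ⊆ K + L := by
    rintro u (⟨k, hk, rfl⟩ | ⟨l, hl, rfl⟩)
    · exact ⟨k, hk, b, hbL, add_comm k b⟩
    · exact ⟨a, haK, l, hl, rfl⟩
  -- the translates `b + K` and `a + L` meet only at `a + b`, the top of one and bottom of the other
  have hinter : (b +ᵥ K) ∩ (a +ᵥ L) ⊆ {a + b} := by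
    rintro u ⟨⟨k, hk, rfl⟩, ⟨l, hl, hlu⟩⟩
    have hka : k ≤ a := le_csSup hK.bddAbove hk
    have hbl : b ≤ l := csInf_le hL.bddBelow hl
    change a + l = b + k at hlu
    exact mem_singleton_iff.2 (by change b + k = a + b; linarith)
  calc volume K + volume L
      = volume (b +ᵥ K) + volume (a +ᵥ L) := by rw [measure_vadd, measure_vadd]
    _ = volume ((b +ᵥ K) ∪ (a +ᵥ L)) + volume ((b +ᵥ K) ∩ (a +ᵥ L)) :=
        (measure_union_add_inter _ (hL.measurableSet.const_vadd a)).symm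
    _ ≤ volume (K + L) + 0 := by
        gcongr
        exact (measure_mono hinter).trans (measure_singleton _).le
    _ = volume (K + L) := add_zero _

theorem volume_add_volume_le_volume_add {A B : Set ℝ} (hA : MeasurableSet A)
    (hB : MeasurableSet B) (hA₀ : A.Nonempty) (hB₀ : B.Nonempty) :
    volume A + volume B ≤ volume (A + B) := by
  obtain ⟨a, ha⟩ := hA₀
  obtain ⟨b, hb⟩ := hB₀
  rw [hA.measure_eq_iSup_isCompact, hB.measure_eq_iSup_isCompact]
  simp only [iSup_and']
  refine ENNReal.biSup_add_biSup_le' ⟨∅, empty_subset _, isCompact_empty⟩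
    ⟨∅, empty_subset _, isCompact_empty⟩ fun K ⟨hKA, hK⟩ L ⟨hLB, hL⟩ => ?_
  calc volume K + volume L ≤ volume (insert a K) + volume (insert b L) := by
        gcongr <;> exact subset_insert _ _
    _ ≤ volume (insert a K + insert b L) :=
        volume_add_volume_le_volume_add_of_isCompact (hK.insert a) (hL.insert b)
          (insert_nonempty _ _) (insert_nonempty _ _)
    _ ≤ volume (A + B) :=
        measure_mono (add_subset_add (insert_subset ha hKA) (insert_subset hb hLB))

theorem ofReal_mul_volume_add_ofReal_mul_volume_le {A B : Set ℝ} (hA : MeasurableSet A)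
    (hB : MeasurableSet B) (hA₀ : A.Nonempty) (hB₀ : B.Nonempty) {s t : ℝ} (hs : 0 ≤ s)
    (ht : 0 ≤ t) :
    ENNReal.ofReal s * volume A + ENNReal.ofReal t * volume B ≤ volume (s • A + t • B) := by
  have hvol : ∀ {r : ℝ}, 0 ≤ r → ∀ C : Set ℝ, volume (r • C) = ENNReal.ofReal r * volume C :=
    fun hr C => by rw [Measure.addHaar_smul, Module.finrank_self, pow_one, abs_of_nonneg hr]
  rw [← hvol hs, ← hvol ht]
  exact volume_add_volume_le_volume_add (hA.const_smul₀ s) (hB.const_smul₀ t) hA₀.smul_set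
    hB₀.smul_set

theorem ofReal_mul_lintegral_add_le_of_iSup_eq {p : ℝ} (hp : p ∈ Icc (0 : ℝ) 1)
    {f g h : ℝ → ℝ≥0∞} (hf : Measurable f) (hg : Measurable g) (hh : Measurable h)
    (hfg : ⨆ x, f x = ⨆ y, g y) (hg_top : ⨆ y, g y ≠ ∞)
    (hfgh : ∀ x y, min (f x) (g y) ≤ h (p • x + (1 - p) • y)) :
    ENNReal.ofReal p * (∫⁻ x, f x) + ENNReal.ofReal (1 - p) * ∫⁻ y, g y ≤ ∫⁻ z, h z := by
  set M := ⨆ y, g y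
  have hfM (x : ℝ) : f x ≤ M := hfg ▸ le_iSup f x
  have hgM (y : ℝ) : g y ≤ M := le_iSup g y
  -- capping `h` at `M` keeps the hypothesis and makes the layer cake formula available
  set h' := fun z => min (h z) M
  have hlevel : ∀ t ∈ Ioi (0 : ℝ),
      ENNReal.ofReal p * volume {x | ENNReal.ofReal t < f x}
        + ENNReal.ofReal (1 - p) * volume {y | ENNReal.ofReal t < g y}
        ≤ volume {z | ENNReal.ofReal t < h' z} := by
    intro t _
    by_cases htM : ENNReal.ofReal t < M
    · obtain ⟨x₀, hx₀⟩ := lt_iSup_iff.1 (hfg ▸ htM)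
      obtain ⟨y₀, hy₀⟩ := lt_iSup_iff.1 htM
      refine (ofReal_mul_volume_add_ofReal_mul_volume_le (hf measurableSet_Ioi)
        (hg measurableSet_Ioi) ⟨x₀, hx₀⟩ ⟨y₀, hy₀⟩ hp.1 (sub_nonneg.2 hp.2)).trans
        (measure_mono ?_)
      rintro _ ⟨_, ⟨x, hx, rfl⟩, _, ⟨y, hy, rfl⟩, rfl⟩
      exact lt_min ((lt_min hx hy).trans_le (hfgh x y)) htM
    · have hempty : ∀ φ : ℝ → ℝ≥0∞, (∀ x, φ x ≤ M) → {x | ENNReal.ofReal t < φ x} = ∅ :=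
        fun φ hφ => eq_empty_of_forall_notMem fun x hx => htM (hx.trans_le (hφ x))
      simp [hempty f hfM, hempty g hgM]
  have hM_top : ∀ {φ : ℝ → ℝ≥0∞}, (∀ x, φ x ≤ M) → ∀ x, φ x ≠ ∞ :=
    fun hφ x => ne_top_of_le_ne_top hg_top (hφ x)
  calc ENNReal.ofReal p * (∫⁻ x, f x) + ENNReal.ofReal (1 - p) * ∫⁻ y, g y
      = (∫⁻ t in Ioi 0, ENNReal.ofReal p * volume {x | ENNReal.ofReal t < f x})
        + ∫⁻ t in Ioi 0, ENNReal.ofReal (1 - p) * volume {y | ENNReal.ofReal t < g y} := by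
        rw [lintegral_eq_lintegral_meas_ofReal_lt volume hf (hM_top hfM),
          lintegral_eq_lintegral_meas_ofReal_lt volume hg (hM_top hgM),
          lintegral_const_mul' _ _ ENNReal.ofReal_ne_top,
          lintegral_const_mul' _ _ ENNReal.ofReal_ne_top]
    _ ≤ ∫⁻ t in Ioi 0, volume {z | ENNReal.ofReal t < h' z} :=
        (le_lintegral_add _ _).trans (setLIntegral_mono' measurableSet_Ioi hlevel)
    _ = ∫⁻ z, h' z :=
        (lintegral_eq_lintegral_meas_ofReal_lt volume (hh.min measurable_const)
          (hM_top fun _ => min_le_right _ _)).symm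
    _ ≤ ∫⁻ z, h z := lintegral_mono fun _ => min_le_left _ _

theorem lintegral_rpow_mul_lintegral_rpow_le_of_iSup_ne_top {p : ℝ} (hp : p ∈ Ioo (0 : ℝ) 1)
    {f g h : ℝ → ℝ≥0∞} (hf : Measurable f) (hg : Measurable g) (hh : Measurable h)
    (hf_top : ⨆ x, f x ≠ ∞) (hg_top : ⨆ y, g y ≠ ∞)
    (hfgh : ∀ x y, f x ^ p * g y ^ (1 - p) ≤ h (p • x + (1 - p) • y)) :
    (∫⁻ x, f x) ^ p * (∫⁻ y, g y) ^ (1 - p) ≤ ∫⁻ z, h z := by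
  have hq : 0 < 1 - p := sub_pos.2 hp.2
  set a := ⨆ x, f x
  set b := ⨆ y, g y
  rcases eq_or_ne a 0 with ha | ha
  · simp [ENNReal.iSup_eq_zero.1 ha, ENNReal.zero_rpow_of_pos hp.1]
  rcases eq_or_ne b 0 with hb | hb
  · simp [ENNReal.iSup_eq_zero.1 hb, ENNReal.zero_rpow_of_pos hq]
  set c := a ^ p * b ^ (1 - p)
  have hc₀ : c ≠ 0 := mul_ne_zero (ENNReal.rpow_pos (pos_iff_ne_zero.2 ha) hf_top).ne'
    (ENNReal.rpow_pos (pos_iff_ne_zero.2 hb) hg_top).ne'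
  have hc_top : c ≠ ∞ := ENNReal.mul_ne_top (ENNReal.rpow_ne_top_of_nonneg hp.1.le hf_top)
    (ENNReal.rpow_ne_top_of_nonneg hq.le hg_top)
  have hsup : ⨆ x, a⁻¹ * f x = ⨆ y, b⁻¹ * g y := by
    rw [← ENNReal.mul_iSup, ← ENNReal.mul_iSup, ENNReal.inv_mul_cancel ha hf_top,
      ENNReal.inv_mul_cancel hb hg_top]
  have hadd := ofReal_mul_lintegral_add_le_of_iSup_eq (Ioo_subset_Icc_self hp)
    (hf.const_mul a⁻¹) (hg.const_mul b⁻¹) (hh.const_mul c⁻¹) hsup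
    (by rw [← ENNReal.mul_iSup]; exact ENNReal.mul_ne_top (ENNReal.inv_ne_top.2 hb) hg_top)
    fun x y => (ENNReal.min_le_rpow_mul_rpow (Ioo_subset_Icc_self hp) _ _).trans <| by
      rw [ENNReal.inv_mul_rpow_mul_inv_mul_rpow hf_top hg_top (Ioo_subset_Icc_self hp)]
      exact mul_le_mul_right (hfgh x y) _
  rw [lintegral_const_mul _ hf, lintegral_const_mul _ hg, lintegral_const_mul _ hh] at hadd
  have hamgm := ENNReal.geom_mean_le_arith_mean2_weighted hp (a⁻¹ * ∫⁻ x, f x) (b⁻¹ * ∫⁻ y, g y)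
  rw [ENNReal.inv_mul_rpow_mul_inv_mul_rpow hf_top hg_top (Ioo_subset_Icc_self hp)] at hamgm
  exact (ENNReal.mul_le_mul_iff_right (ENNReal.inv_ne_zero.2 hc_top)
    (ENNReal.inv_ne_top.2 hc₀)).1 (hamgm.trans hadd)

end Real

section PrekopaLeindler

variable {α : Type*} [MeasurableSpace α]

def SatisfiesPrekopaLeindler [Add α] [SMul ℝ α] (μ : Measure α) : Prop :=
  ∀ p ∈ Ioo (0 : ℝ) 1, ∀ f g h : α → ℝ≥0∞, Measurable f → Measurable g → Measurable h →
    (∀ x y, f x ^ p * g y ^ (1 - p) ≤ h (p • x + (1 - p) • y)) →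
    (∫⁻ x, f x ∂μ) ^ p * (∫⁻ y, g y ∂μ) ^ (1 - p) ≤ ∫⁻ z, h z ∂μ

namespace SatisfiesPrekopaLeindler

theorem of_iSup_ne_top [Add α] [SMul ℝ α] {μ : Measure α}
    (H : ∀ p ∈ Ioo (0 : ℝ) 1, ∀ f g h : α → ℝ≥0∞, Measurable f → Measurable g → Measurable h →
      ⨆ x, f x ≠ ∞ → ⨆ y, g y ≠ ∞ →
      (∀ x y, f x ^ p * g y ^ (1 - p) ≤ h (p • x + (1 - p) • y)) →
      (∫⁻ x, f x ∂μ) ^ p * (∫⁻ y, g y ∂μ) ^ (1 - p) ≤ ∫⁻ z, h z ∂μ) :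
    SatisfiesPrekopaLeindler μ := by
  intro p hp f g h hf hg hh hfgh
  have hq : 0 < 1 - p := sub_pos.2 hp.2
  have hbdd : ∀ (φ : α → ℝ≥0∞) (k : ℕ), ⨆ x, min (φ x) k ≠ ∞ := fun φ k =>
    ne_top_of_le_ne_top (ENNReal.natCast_ne_top k) (iSup_le fun _ => min_le_right _ _)
  have htrunc : ∀ k : ℕ, (∫⁻ x, min (f x) k ∂μ) ^ p * (∫⁻ y, min (g y) k ∂μ) ^ (1 - p)
      ≤ ∫⁻ z, h z ∂μ := fun k =>
    H p hp _ _ h (hf.min measurable_const) (hg.min measurable_const) hh (hbdd f k) (hbdd g k)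
      fun x y => (mul_le_mul' (ENNReal.rpow_le_rpow (min_le_left _ _) hp.1.le)
        (ENNReal.rpow_le_rpow (min_le_left _ _) hq.le)).trans (hfgh x y)
  have hmono : ∀ (φ : α → ℝ≥0∞) {i j : ℕ}, i ≤ j →
      ∫⁻ x, min (φ x) i ∂μ ≤ ∫⁻ x, min (φ x) j ∂μ := fun φ i j hij =>
    lintegral_mono fun x => min_le_min le_rfl (Nat.cast_le.2 hij)
  rw [lintegral_eq_iSup_lintegral_min_natCast μ hf, lintegral_eq_iSup_lintegral_min_natCast μ hg,
    ENNReal.iSup_rpow _ hp.1, ENNReal.iSup_rpow _ hq, ENNReal.iSup_mul]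
  simp_rw [ENNReal.mul_iSup]
  exact iSup₂_le fun i j => (mul_le_mul'
    (ENNReal.rpow_le_rpow (hmono f (le_max_left i j)) hp.1.le)
    (ENNReal.rpow_le_rpow (hmono g (le_max_right i j)) hq.le)).trans (htrunc (max i j))

theorem dirac [AddCommMonoid α] [Module ℝ α] (x : α) :
    SatisfiesPrekopaLeindler (Measure.dirac x) := by
  intro p _ f g h hf hg hh hfgh
  rw [lintegral_dirac' _ hf, lintegral_dirac' _ hg, lintegral_dirac' _ hh]
  simpa only [Convex.combo_self (add_sub_cancel p 1)] using hfgh x x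

theorem prod {β : Type*} [MeasurableSpace β] [Add α] [SMul ℝ α] [Add β] [SMul ℝ β]
    {μ : Measure α} {ν : Measure β} [SFinite ν] (hμ : SatisfiesPrekopaLeindler μ)
    (hν : SatisfiesPrekopaLeindler ν) : SatisfiesPrekopaLeindler (μ.prod ν) := by
  intro p hp f g h hf hg hh hfgh
  rw [lintegral_prod f hf.aemeasurable, lintegral_prod g hg.aemeasurable,
    lintegral_prod h hh.aemeasurable]
  refine hμ p hp _ _ _ hf.lintegral_prod_right' hg.lintegral_prod_right'
    hh.lintegral_prod_right' fun x x' => ?_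
  exact hν p hp _ _ _ (hf.comp measurable_prodMk_left) (hg.comp measurable_prodMk_left)
    (hh.comp measurable_prodMk_left) fun y y' => hfgh (x, y) (x', y')

theorem of_measurePreserving {β : Type*} [MeasurableSpace β] [Add α] [SMul ℝ α] [Add β]
    [SMul ℝ β] {μ : Measure α} {ν : Measure β} (hν : SatisfiesPrekopaLeindler ν) (e : α ≃ᵐ β)
    (he : MeasurePreserving e μ ν)
    (he_lin : ∀ (s t : ℝ) (x y : α), e (s • x + t • y) = s • e x + t • e y) :
    SatisfiesPrekopaLeindler μ := by
  intro p hp f g h hf hg hh hfgh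
  have hsymm : ∀ z w, e.symm (p • z + (1 - p) • w) = p • e.symm z + (1 - p) • e.symm w :=
    fun z w => e.injective (by simp only [he_lin, MeasurableEquiv.apply_symm_apply])
  have hcomp : ∀ φ : α → ℝ≥0∞, Measurable φ → ∫⁻ z, φ (e.symm z) ∂ν = ∫⁻ x, φ x ∂μ :=
    fun φ hφ => (he.symm e).lintegral_comp hφ
  rw [← hcomp f hf, ← hcomp g hg, ← hcomp h hh]
  exact hν p hp _ _ _ (hf.comp e.symm.measurable) (hg.comp e.symm.measurable)
    (hh.comp e.symm.measurable) fun z w => by simpa only [hsymm] using hfgh (e.symm z) (e.symm w)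

theorem pi {E : Type*} [MeasurableSpace E] [AddCommMonoid E] [Module ℝ E] :
    ∀ {m : ℕ} {μ : Fin m → Measure E} [∀ i, SigmaFinite (μ i)],
      (∀ i, SatisfiesPrekopaLeindler (μ i)) → SatisfiesPrekopaLeindler (Measure.pi μ)
  | 0, μ, _, _ => by rw [Measure.pi_of_empty]; exact dirac _
  | _ + 1, μ, _, hμ => ((hμ 0).prod (pi fun j => hμ (Fin.succAbove 0 j))).of_measurePreserving
      (MeasurableEquiv.piFinSuccAbove _ 0) (measurePreserving_piFinSuccAbove μ 0)
      fun _ _ _ _ => rfl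

end SatisfiesPrekopaLeindler

theorem satisfiesPrekopaLeindler_volume_real : SatisfiesPrekopaLeindler (volume : Measure ℝ) :=
  .of_iSup_ne_top fun _ hp _ _ _ => Real.lintegral_rpow_mul_lintegral_rpow_le_of_iSup_ne_top hp

theorem SatisfiesPrekopaLeindler.integral_rpow_mul_integral_rpow_le [AddCommMonoid α]
    [Module ℝ α] {μ : Measure α} (hμ : SatisfiesPrekopaLeindler μ) {p : ℝ}
    (hp : p ∈ Ioo (0 : ℝ) 1) {f g h : α → ℝ} (hf₀ : ∀ x, 0 ≤ f x) (hg₀ : ∀ y, 0 ≤ g y)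
    (hf : Measurable f) (hg : Measurable g) (hh : Measurable h) (hh_int : Integrable h μ)
    (hfgh : ∀ x y, f x ^ p * g y ^ (1 - p) ≤ h (p • x + (1 - p) • y)) :
    (∫ x, f x ∂μ) ^ p * (∫ y, g y ∂μ) ^ (1 - p) ≤ ∫ z, h z ∂μ := by
  have hq : 0 < 1 - p := sub_pos.2 hp.2
  have hh₀ (z : α) : 0 ≤ h z := by
    simpa only [Convex.combo_self (add_sub_cancel p 1)] using
      (mul_nonneg (Real.rpow_nonneg (hf₀ z) p) (Real.rpow_nonneg (hg₀ z) _)).trans (hfgh z z)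
  have hlint : ∀ φ : α → ℝ, (∀ x, 0 ≤ φ x) → Measurable φ →
      ∫ x, φ x ∂μ = (∫⁻ x, ENNReal.ofReal (φ x) ∂μ).toReal := fun φ hφ₀ hφ =>
    integral_eq_lintegral_of_nonneg_ae (.of_forall hφ₀) hφ.aestronglyMeasurable
  have hPL := hμ p hp _ _ _ hf.ennreal_ofReal hg.ennreal_ofReal hh.ennreal_ofReal fun x y => by
    rw [ENNReal.ofReal_rpow_of_nonneg (hf₀ x) hp.1.le, ENNReal.ofReal_rpow_of_nonneg (hg₀ y) hq.le,
      ← ENNReal.ofReal_mul (Real.rpow_nonneg (hf₀ x) p)]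
    exact ENNReal.ofReal_le_ofReal (hfgh x y)
  rw [hlint f hf₀ hf, hlint g hg₀ hg, hlint h hh₀ hh, ENNReal.toReal_rpow,
    ENNReal.toReal_rpow, ← ENNReal.toReal_mul]
  exact ENNReal.toReal_mono hh_int.lintegral_lt_top.ne hPL

end PrekopaLeindler

/-- (Prékopa) The marginal of a jointly log-concave integrable nonnegative
function on ℝⁿ × ℝᵐ is log-concave. -/
theorem prekopa_marginal {n m : ℕ}
    (ρ : (Fin n → ℝ) × (Fin m → ℝ) → ℝ)
    (hρ0 : ∀ z, 0 ≤ ρ z) (hρm : Measurable ρ)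
    (hρint : ∀ x : Fin n → ℝ, Integrable (fun y => ρ (x, y)) volume)
    (hρlc : ∀ z z' : (Fin n → ℝ) × (Fin m → ℝ), ∀ p ∈ Icc (0:ℝ) 1,
      ρ (p • z + (1 - p) • z') ≥ ρ z ^ p * ρ z' ^ (1 - p)) :
    ∀ x x' : Fin n → ℝ, ∀ p ∈ Icc (0:ℝ) 1,
      (∫ y, ρ (p • x + (1 - p) • x', y)) ≥
        (∫ y, ρ (x, y)) ^ p * (∫ y, ρ (x', y)) ^ (1 - p) := by
  intro x x' p hp
  rcases hp.1.eq_or_lt with rfl | hp₀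
  · simp
  rcases hp.2.eq_or_lt with rfl | hp₁
  · simp
  have hslice : ∀ u : Fin n → ℝ, Measurable fun y => ρ (u, y) :=
    fun _ => hρm.comp measurable_prodMk_left
  exact (SatisfiesPrekopaLeindler.pi fun _ => satisfiesPrekopaLeindler_volume_real)
    |>.integral_rpow_mul_integral_rpow_le ⟨hp₀, hp₁⟩ (fun _ => hρ0 _) (fun _ => hρ0 _)
      (hslice x) (hslice x') (hslice _) (hρint _) fun y y' => hρlc (x, y) (x', y') p hp
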